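/- Let R be an associative ring with unity and M a left R-module. Then M is strongly two-degree Ding projective if and only if there is a short exact sequence 0 → M → D → M → 0 with D Ding projective such that Hom_R(−, F) leaves this short exact sequence exact for every flat left R-module F. -/

import Mathlib

universe u

open scoped TensorProduct DirectSum

/-- The subgroup of `E ⊗[ℤ] F` by which one quotients to obtain the balanced tensor
product `E ⊗_R F` of a right `R`-module `E` and a left `R`-module `F`. -/
def balancedSub (R : Type u) [Ring R] (E F : Type u) [AddCommGroup E] [Module Rᵐᵒᵖ E]
    [AddCommGroup F] [Module R F] : Submodule ℤ (TensorProduct ℤ E F) :=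
  Submodule.span ℤ
    {x | ∃ (r : R) (e : E) (f : F),
      x = (MulOpposite.op r • e) ⊗ₜ[ℤ] f - e ⊗ₜ[ℤ] (r • f)}

/-- The tensor product `E ⊗_R F` of a right `R`-module `E` and a left `R`-module `F`
over a possibly noncommutative ring `R`, realized as a quotient of `E ⊗[ℤ] F`. -/
def ModTensor (R : Type u) [Ring R] (E F : Type u) [AddCommGroup E] [Module Rᵐᵒᵖ E]
    [AddCommGroup F] [Module R F] : Type u :=
  TensorProduct ℤ E F ⧸ balancedSub R E F

noncomputable instance (R : Type u) [Ring R] (E F : Type u) [AddCommGroup E] [Module Rᵐᵒᵖ E]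
    [AddCommGroup F] [Module R F] : AddCommGroup (ModTensor R E F) :=
  inferInstanceAs (AddCommGroup (TensorProduct ℤ E F ⧸ balancedSub R E F))

/-- The map `E ⊗_R F → E' ⊗_R F` induced by a map `g : E → E'` of right `R`-modules. -/
noncomputable def ModTensor.mapLeft (R : Type u) [Ring R] {E E' : Type u} [AddCommGroup E]
    [Module Rᵐᵒᵖ E] [AddCommGroup E'] [Module Rᵐᵒᵖ E'] (F : Type u) [AddCommGroup F]
    [Module R F] (g : E →ₗ[Rᵐᵒᵖ] E') : ModTensor R E F →ₗ[ℤ] ModTensor R E' F :=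
  Submodule.mapQ (balancedSub R E F) (balancedSub R E' F)
    (TensorProduct.map (g.restrictScalars ℤ) LinearMap.id)
    (by
      rw [balancedSub, Submodule.span_le]
      rintro x ⟨r, e, f, rfl⟩
      refine Submodule.subset_span ⟨r, g e, f, ?_⟩
      change TensorProduct.map (g.restrictScalars ℤ) LinearMap.id
        ((MulOpposite.op r • e) ⊗ₜ[ℤ] f - e ⊗ₜ[ℤ] (r • f)) = _
      simp [map_sub, TensorProduct.map_tmul, map_smul])

/-- The map `E ⊗_R F → E ⊗_R F'` induced by a map `f : F → F'` of left `R`-modules. -/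
noncomputable def ModTensor.mapRight (R : Type u) [Ring R] (E : Type u) [AddCommGroup E]
    [Module Rᵐᵒᵖ E] {F F' : Type u} [AddCommGroup F] [Module R F] [AddCommGroup F']
    [Module R F'] (f : F →ₗ[R] F') : ModTensor R E F →ₗ[ℤ] ModTensor R E F' :=
  Submodule.mapQ (balancedSub R E F) (balancedSub R E F')
    (TensorProduct.map LinearMap.id (f.restrictScalars ℤ))
    (by
      rw [balancedSub, Submodule.span_le]
      rintro x ⟨r, e, y, rfl⟩
      refine Submodule.subset_span ⟨r, e, f y, ?_⟩
      change TensorProduct.map LinearMap.id (f.restrictScalars ℤ)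
        ((MulOpposite.op r • e) ⊗ₜ[ℤ] y - e ⊗ₜ[ℤ] (r • y)) = _
      simp [map_sub, TensorProduct.map_tmul, map_smul])

/-- A left module `F` over a (possibly noncommutative) ring `R` is flat if tensoring
with `F` preserves injectivity of maps of right `R`-modules. -/
def IsFlatModule (R : Type u) [Ring R] (F : Type u) [AddCommGroup F] [Module R F] : Prop :=
  ∀ (E E' : Type u) [AddCommGroup E] [Module Rᵐᵒᵖ E] [AddCommGroup E'] [Module Rᵐᵒᵖ E']
    (g : E →ₗ[Rᵐᵒᵖ] E'), Function.Injective g →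
      Function.Injective (ModTensor.mapLeft R F g)

/-- `Ext^i_R(M, L) = 0`, expressed using the `Ext` functor on the category of left
`R`-modules (with its `ℤ`-linear structure). -/
def ExtIsZero (R : Type u) [Ring R] (i : ℕ) (M L : Type u) [AddCommGroup M] [Module R M]
    [AddCommGroup L] [Module R L] : Prop :=
  Subsingleton ((((_root_.Ext ℤ (ModuleCat.{u} R) i).obj
    (Opposite.op (ModuleCat.of R M))).obj (ModuleCat.of R L)) : Type u)

/-- `FlatDimLE R n L` means the left `R`-module `L` admits a flat resolution of
length at most `n`. -/
def FlatDimLE (R : Type u) [Ring R] : ℕ → ModuleCat.{u} R → Prop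
  | 0, L => IsFlatModule R L
  | n + 1, L =>
    ∃ (F K : ModuleCat.{u} R) (ι : (K : Type u) →ₗ[R] F) (π : (F : Type u) →ₗ[R] L),
      IsFlatModule R F ∧ Function.Injective ι ∧ Function.Surjective π ∧
      Function.Exact ι π ∧ FlatDimLE R n K

/-- A left `R`-module `L` has finite flat dimension if it admits a finite resolution
by flat modules. -/
def HasFiniteFlatDimension (R : Type u) [Ring R] (L : Type u) [AddCommGroup L]
    [Module R L] : Prop :=
  ∃ n : ℕ, FlatDimLE R n (ModuleCat.of R L)

/-- A left `R`-module `M` is Ding projective if there is an exact sequence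
`⋯ → P₁ → P₀ → P₋₁ → P₋₂ → ⋯` of projective modules with `M ≅ ker (P₀ → P₋₁)`
which stays exact under `Hom_R(-, F)` for every flat module `F`. -/
def IsDingProjective (R : Type u) [Ring R] (M : Type u) [AddCommGroup M] [Module R M] : Prop :=
  ∃ (P : ℤ → ModuleCat.{u} R) (d : ∀ n : ℤ, (P (n + 1) : Type u) →ₗ[R] P n),
    (∀ n, Module.Projective R (P n)) ∧
    (∀ n, Function.Exact (d (n + 1)) (d n)) ∧
    (∀ (F : Type u) [AddCommGroup F] [Module R F], IsFlatModule R F →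
      ∀ n : ℤ, Function.Exact
        (fun g : (P n : Type u) →ₗ[R] F => g ∘ₗ d n)
        (fun g : (P (n + 1) : Type u) →ₗ[R] F => g ∘ₗ d (n + 1))) ∧
    Nonempty (M ≃ₗ[R] LinearMap.ker (d (-1)))

/-- A left `R`-module `M` is two-degree Ding projective if there is an exact sequence
`⋯ → D₁ → D₀ → D₋₁ → D₋₂ → ⋯` of Ding projective modules with `M ≅ ker (D₀ → D₋₁)`
which stays exact under `Hom_R(-, F)` for every flat module `F`. -/
def IsTwoDegreeDingProjective (R : Type u) [Ring R] (M : Type u) [AddCommGroup M]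
    [Module R M] : Prop :=
  ∃ (D : ℤ → ModuleCat.{u} R) (d : ∀ n : ℤ, (D (n + 1) : Type u) →ₗ[R] D n),
    (∀ n, IsDingProjective R (D n)) ∧
    (∀ n, Function.Exact (d (n + 1)) (d n)) ∧
    (∀ (F : Type u) [AddCommGroup F] [Module R F], IsFlatModule R F →
      ∀ n : ℤ, Function.Exact
        (fun g : (D n : Type u) →ₗ[R] F => g ∘ₗ d n)
        (fun g : (D (n + 1) : Type u) →ₗ[R] F => g ∘ₗ d (n + 1))) ∧
    Nonempty (M ≃ₗ[R] LinearMap.ker (d (-1)))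

/-- A left `R`-module `M` is strongly two-degree Ding projective if there is an exact
sequence `⋯ →f D →f D →f D →f ⋯` with `D` Ding projective and a single map `f`, with
`M ≅ ker f`, which stays exact under `Hom_R(-, F)` for every flat module `F`. -/
def IsStronglyTwoDegreeDingProjective (R : Type u) [Ring R] (M : Type u) [AddCommGroup M]
    [Module R M] : Prop :=
  ∃ (D : ModuleCat.{u} R) (f : (D : Type u) →ₗ[R] D),
    IsDingProjective R D ∧
    Function.Exact f f ∧
    (∀ (F : Type u) [AddCommGroup F] [Module R F], IsFlatModule R F →
      Function.Exact
        (fun g : (D : Type u) →ₗ[R] F => g ∘ₗ f)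
        (fun g : (D : Type u) →ₗ[R] F => g ∘ₗ f)) ∧
    Nonempty (M ≃ₗ[R] LinearMap.ker f)

/-- A left `R`-module `M` is Gorenstein projective if there is an exact sequence
`⋯ → P₁ → P₀ → P₋₁ → P₋₂ → ⋯` of projective modules with `M ≅ ker (P₀ → P₋₁)`
which stays exact under `Hom_R(-, Q)` for every projective module `Q`. -/
def IsGorensteinProjective (R : Type u) [Ring R] (M : Type u) [AddCommGroup M]
    [Module R M] : Prop :=
  ∃ (P : ℤ → ModuleCat.{u} R) (d : ∀ n : ℤ, (P (n + 1) : Type u) →ₗ[R] P n),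
    (∀ n, Module.Projective R (P n)) ∧
    (∀ n, Function.Exact (d (n + 1)) (d n)) ∧
    (∀ (Q : Type u) [AddCommGroup Q] [Module R Q], Module.Projective R Q →
      ∀ n : ℤ, Function.Exact
        (fun g : (P n : Type u) →ₗ[R] Q => g ∘ₗ d n)
        (fun g : (P (n + 1) : Type u) →ₗ[R] Q => g ∘ₗ d (n + 1))) ∧
    Nonempty (M ≃ₗ[R] LinearMap.ker (d (-1)))

/-- A left `R`-module `H` is Gorenstein flat if there is an exact sequence
`⋯ → F₁ → F₀ → F₋₁ → F₋₂ → ⋯` of flat modules with `H ≅ ker (F₀ → F₋₁)` which stays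
exact under `E ⊗_R -` for every injective right `R`-module `E`. -/
def IsGorensteinFlat (R : Type u) [Ring R] (H : Type u) [AddCommGroup H] [Module R H] : Prop :=
  ∃ (F : ℤ → ModuleCat.{u} R) (d : ∀ n : ℤ, (F (n + 1) : Type u) →ₗ[R] F n),
    (∀ n, IsFlatModule R (F n)) ∧
    (∀ n, Function.Exact (d (n + 1)) (d n)) ∧
    (∀ (E : Type u) [AddCommGroup E] [Module Rᵐᵒᵖ E], Module.Injective Rᵐᵒᵖ E →
      ∀ n : ℤ, Function.Exact
        (ModTensor.mapRight R E (d (n + 1)))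
        (ModTensor.mapRight R E (d n))) ∧
    Nonempty (H ≃ₗ[R] LinearMap.ker (d (-1)))

/-- A left `R`-module `E` is FP-injective if `Ext¹_R(F, E) = 0` for every finitely
presented module `F`. -/
def IsFPInjective (R : Type u) [Ring R] (E : Type u) [AddCommGroup E] [Module R E] : Prop :=
  ∀ (F : Type u) [AddCommGroup F] [Module R F], Module.FinitePresentation R F →
    ExtIsZero R 1 F E

/-- A left `R`-module `M` is Ding injective if there is an exact sequence
`⋯ → E₁ → E₀ → E₋₁ → E₋₂ → ⋯` of injective modules with `M ≅ ker (E₀ → E₋₁)`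
which stays exact under `Hom_R(H, -)` for every FP-injective module `H`. -/
def IsDingInjective (R : Type u) [Ring R] (M : Type u) [AddCommGroup M] [Module R M] : Prop :=
  ∃ (E : ℤ → ModuleCat.{u} R) (d : ∀ n : ℤ, (E (n + 1) : Type u) →ₗ[R] E n),
    (∀ n, Module.Injective R (E n)) ∧
    (∀ n, Function.Exact (d (n + 1)) (d n)) ∧
    (∀ (H : Type u) [AddCommGroup H] [Module R H], IsFPInjective R H →
      ∀ n : ℤ, Function.Exact
        (fun g : H →ₗ[R] (E (n + 1 + 1) : Type u) => d (n + 1) ∘ₗ g)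
        (fun g : H →ₗ[R] (E (n + 1) : Type u) => d n ∘ₗ g)) ∧
    Nonempty (M ≃ₗ[R] LinearMap.ker (d (-1)))

/-- A left `R`-module `M` is two-degree Ding injective if there is an exact sequence
`⋯ → D₁ → D₀ → D₋₁ → D₋₂ → ⋯` of Ding injective modules with `M ≅ ker (D₀ → D₋₁)`
which stays exact under `Hom_R(H, -)` for every FP-injective module `H`. -/
def IsTwoDegreeDingInjective (R : Type u) [Ring R] (M : Type u) [AddCommGroup M]
    [Module R M] : Prop :=
  ∃ (D : ℤ → ModuleCat.{u} R) (d : ∀ n : ℤ, (D (n + 1) : Type u) →ₗ[R] D n),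
    (∀ n, IsDingInjective R (D n)) ∧
    (∀ n, Function.Exact (d (n + 1)) (d n)) ∧
    (∀ (H : Type u) [AddCommGroup H] [Module R H], IsFPInjective R H →
      ∀ n : ℤ, Function.Exact
        (fun g : H →ₗ[R] (D (n + 1 + 1) : Type u) => d (n + 1) ∘ₗ g)
        (fun g : H →ₗ[R] (D (n + 1) : Type u) => d n ∘ₗ g)) ∧
    Nonempty (M ≃ₗ[R] LinearMap.ker (d (-1)))

/- `Function.Exact f f` makes `f` the composite `D ↠ ker f ≅ M ↪ D`; conversely, for a short
exact sequence `0 → M →ι D →π M → 0` one has `ker (ι ∘ π) = ker π = range ι = range (ι ∘ π)`.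
Under `Hom_R(-, F)`, precomposition with `ι ∘ π` is `(∘ π) ∘ (∘ ι)`, where `∘ π` is injective
with image the kernel of `∘ ι` (left exactness of `Hom`). Hence exactness of `∘ (ι ∘ π)` says
`range (∘ π) = range ((∘ π) ∘ (∘ ι))`, which is exactly the surjectivity of `∘ ι`. -/

theorem Function.Exact.comp_self_exact_iff_surjective {X Y : Type*} [Zero X] [Zero Y]
    {p : Y → X} {q : X → Y} (hpq : Function.Exact p q) (hp : Function.Injective p)
    (hp0 : p 0 = 0) :
    Function.Exact (p ∘ q) (p ∘ q) ↔ Function.Surjective q := by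
  have hker : ∀ x, p (q x) = 0 ↔ x ∈ Set.range p := fun x => by
    rw [← hpq x, ← hp0, hp.eq_iff]
  simp only [Function.Exact, Function.comp_apply, hker]
  rw [← Set.ext_iff, Set.range_comp, ← Set.image_univ, eq_comm,
    (Set.image_injective.mpr hp).eq_iff, Set.range_eq_univ]

section Ring

variable {R A B C F : Type*} [Ring R] [AddCommGroup A] [Module R A] [AddCommGroup B]
  [Module R B] [AddCommGroup C] [Module R C] [AddCommGroup F] [Module R F]

theorem LinearMap.exact_comp_self_iff {ι : A →ₗ[R] B} {π : B →ₗ[R] A}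
    (hι : Function.Injective ι) (hπ : Function.Surjective π) :
    Function.Exact (ι ∘ₗ π) (ι ∘ₗ π) ↔ Function.Exact ι π := by
  rw [LinearMap.exact_iff, LinearMap.exact_iff, LinearMap.ker_comp_of_ker_eq_bot _
    (LinearMap.ker_eq_bot.mpr hι), LinearMap.range_comp_of_range_eq_top _
    (LinearMap.range_eq_top.mpr hπ)]

theorem LinearMap.precomp_injective_of_surjective {π : B →ₗ[R] C} (hπ : Function.Surjective π) :
    Function.Injective (fun g : C →ₗ[R] F => g ∘ₗ π) :=
  fun _ _ hg => (LinearMap.cancel_right hπ).mp hg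

theorem Function.Exact.precomp_exact {ι : A →ₗ[R] B} {π : B →ₗ[R] C} (h : Function.Exact ι π)
    (hπ : Function.Surjective π) :
    Function.Exact (fun g : C →ₗ[R] F => g ∘ₗ π) (fun g : B →ₗ[R] F => g ∘ₗ ι) := by
  intro g
  constructor
  · intro hg
    refine ⟨(LinearMap.range ι).liftQ g (LinearMap.range_le_ker_iff.mpr hg) ∘ₗ
      (h.linearEquivOfSurjective hπ).symm.toLinearMap, ?_⟩
    ext x
    simp
  · rintro ⟨g', rfl⟩
    change (g' ∘ₗ π) ∘ₗ ι = 0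
    rw [LinearMap.comp_assoc, h.linearMap_comp_eq_zero, LinearMap.comp_zero]

theorem Function.Exact.precomp_comp_self_exact_iff {ι : A →ₗ[R] B} {π : B →ₗ[R] A}
    (h : Function.Exact ι π) (hπ : Function.Surjective π) :
    Function.Exact (fun g : B →ₗ[R] F => g ∘ₗ (ι ∘ₗ π)) (fun g : B →ₗ[R] F => g ∘ₗ (ι ∘ₗ π)) ↔
      Function.Surjective (fun g : B →ₗ[R] F => g ∘ₗ ι) :=
  (h.precomp_exact hπ).comp_self_exact_iff_surjective
    (LinearMap.precomp_injective_of_surjective hπ) (LinearMap.zero_comp π)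

theorem Function.Exact.exists_factorization_through_ker {f : B →ₗ[R] B}
    (hf : Function.Exact f f) (e : A ≃ₗ[R] LinearMap.ker f) :
    ∃ (ι : A →ₗ[R] B) (π : B →ₗ[R] A),
      Function.Injective ι ∧ Function.Surjective π ∧ ι ∘ₗ π = f := by
  refine ⟨(LinearMap.ker f).subtype ∘ₗ e,
    e.symm ∘ₗ f.codRestrict (LinearMap.ker f) hf.apply_apply_eq_zero,
    Subtype.val_injective.comp e.injective, e.symm.surjective.comp ?_, ?_⟩
  · rintro ⟨y, hy⟩
    obtain ⟨x, rfl⟩ := (hf y).mp hy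
    exact ⟨x, rfl⟩
  · ext x
    exact congrArg Subtype.val (e.apply_symm_apply _)

theorem Function.Exact.ker_comp_eq_range {ι : A →ₗ[R] B} {π : B →ₗ[R] A}
    (h : Function.Exact ι π) (hι : Function.Injective ι) :
    LinearMap.ker (ι ∘ₗ π) = LinearMap.range ι := by
  rw [LinearMap.ker_comp_of_ker_eq_bot _ (LinearMap.ker_eq_bot.mpr hι), h.linearMap_ker_eq]

end Ring

/-- `M` is strongly two-degree Ding projective iff there is a short exact
sequence `0 → M → D → M → 0` with `D` Ding projective which stays exact under
`Hom_R(-, F)` for every flat module `F`. -/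
theorem strongly_twoDegree_ding_projective_iff_hom_flat_exact (R : Type u) [Ring R]
    (M : Type u) [AddCommGroup M] [Module R M] :
    IsStronglyTwoDegreeDingProjective R M ↔
      ∃ (D : ModuleCat.{u} R) (ι : M →ₗ[R] D) (π : (D : Type u) →ₗ[R] M),
        Function.Injective ι ∧ Function.Surjective π ∧ Function.Exact ι π ∧
        IsDingProjective R D ∧
        (∀ (F : Type u) [AddCommGroup F] [Module R F], IsFlatModule R F →
          Function.Injective (fun g : M →ₗ[R] F => g ∘ₗ π) ∧
          Function.Exact
            (fun g : M →ₗ[R] F => g ∘ₗ π)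
            (fun g : (D : Type u) →ₗ[R] F => g ∘ₗ ι) ∧
          Function.Surjective (fun g : (D : Type u) →ₗ[R] F => g ∘ₗ ι)) := by
  constructor
  · rintro ⟨D, f, hDing, hf, hhom, ⟨e⟩⟩
    obtain ⟨ι, π, hι, hπ, rfl⟩ := hf.exists_factorization_through_ker e
    have hιπ : Function.Exact ι π := (LinearMap.exact_comp_self_iff hι hπ).mp hf
    exact ⟨D, ι, π, hι, hπ, hιπ, hDing, fun F _ _ hF =>
      ⟨LinearMap.precomp_injective_of_surjective hπ, hιπ.precomp_exact hπ,
        (hιπ.precomp_comp_self_exact_iff hπ).mp (hhom F hF)⟩⟩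
  · rintro ⟨D, ι, π, hι, hπ, hιπ, hDing, hhom⟩
    refine ⟨D, ι ∘ₗ π, hDing, (LinearMap.exact_comp_self_iff hι hπ).mpr hιπ,
      fun F _ _ hF => (hιπ.precomp_comp_self_exact_iff hπ).mpr (hhom F hF).2.2, ⟨?_⟩⟩
    exact (LinearEquiv.ofInjective ι hι).trans
      (LinearEquiv.ofEq _ _ (hιπ.ker_comp_eq_range hι).symm)
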